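/- Let (a, μ, δ) be a Lie bialgebra over a field of characteristic 0 (δ : a → ∧²(a) is a 1-cocycle satisfying co-Jacobi), and let f ∈ ∧²(a) be a twist: (id + c + c²)((δ ⊗ id)(f) + [f^{13}, f^{23}]) = 0. Then (a, μ, δ + ad(f)) is again a Lie bialgebra, where ad(f)(x) = [f, x⊗1 + 1⊗x]: the map δ + ad(f) takes values in ∧²(a), is a 1-cocycle, and satisfies the co-Jacobi identity. -/

import Mathlib

open scoped TensorProduct

/-- `ad(f)(x) = [f, x⊗1 + 1⊗x] = −⁅x, f⁆` for `f ∈ a ⊗ a`. -/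
noncomputable def adTwist (k : Type*) [Field k] (a : Type*)
    [LieRing a] [LieAlgebra k a] (f : a ⊗[k] a) : a →ₗ[k] a ⊗[k] a where
  toFun x := -⁅x, f⁆
  map_add' x y := by simp only [add_lie]; abel
  map_smul' c x := by simp only [smul_lie, RingHom.id_apply, smul_neg]

/-- The cyclic permutation `u⊗v⊗w ↦ w⊗u⊗v` of `a⊗a⊗a`. -/
noncomputable def cyclicPerm (k : Type*) [Field k] (a : Type*)
    [LieRing a] [LieAlgebra k a] : a ⊗[k] (a ⊗[k] a) ≃ₗ[k] a ⊗[k] (a ⊗[k] a) :=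
  (TensorProduct.assoc k a a a).symm.trans (TensorProduct.comm k (a ⊗[k] a) a)

/-- `(δ ⊗ id)` applied to an element of `a ⊗ a`, landing in `a ⊗ (a ⊗ a)`. -/
noncomputable def cobrTensorId (k : Type*) [Field k] (a : Type*)
    [LieRing a] [LieAlgebra k a] (δ : a →ₗ[k] a ⊗[k] a) (w : a ⊗[k] a) :
    a ⊗[k] (a ⊗[k] a) :=
  (TensorProduct.assoc k a a a) ((LinearMap.rTensor a δ) w)

namespace TwistAux

variable (k : Type*) [Field k] (a : Type*) [LieRing a] [LieAlgebra k a]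

@[simp] lemma cyclicPerm_tmul (u v w : a) :
    cyclicPerm k a (u ⊗ₜ[k] (v ⊗ₜ[k] w)) = w ⊗ₜ[k] (u ⊗ₜ[k] v) := by
  simp [cyclicPerm]

@[simp] lemma adTwist_apply (f : a ⊗[k] a) (x : a) : adTwist k a f x = -⁅x, f⁆ := rfl

/-- `psiT g w = Σ_{(p,q)∈w} ⁅p,g⁆ ⊗ q` (associated). -/
noncomputable def psiT (g : a ⊗[k] a) : a ⊗[k] a →ₗ[k] a ⊗[k] (a ⊗[k] a) :=
  -((TensorProduct.assoc k a a a).toLinearMap ∘ₗ (adTwist k a g).rTensor a)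

lemma psiT_tmul (g : a ⊗[k] a) (p q : a) :
    psiT k a g (p ⊗ₜ[k] q) = (TensorProduct.assoc k a a a) (⁅p, g⁆ ⊗ₜ[k] q) := by
  simp [psiT, TensorProduct.neg_tmul]

lemma psiT_tmul_tmul (u v p q : a) :
    psiT k a (u ⊗ₜ[k] v) (p ⊗ₜ[k] q)
      = ⁅p, u⁆ ⊗ₜ[k] (v ⊗ₜ[k] q) + u ⊗ₜ[k] (⁅p, v⁆ ⊗ₜ[k] q) := by
  simp [psiT_tmul, TensorProduct.add_tmul]

lemma adTwist_add (g g' : a ⊗[k] a) :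
    adTwist k a (g + g') = adTwist k a g + adTwist k a g' := by
  ext x; simp [lie_add]; abel

lemma adTwist_neg (g : a ⊗[k] a) : adTwist k a (-g) = -adTwist k a g := by
  ext x; simp

lemma adTwist_zero : adTwist k a (0 : a ⊗[k] a) = 0 := by
  ext x; simp

lemma psiT_add_left (g g' : a ⊗[k] a) :
    psiT k a (g + g') = psiT k a g + psiT k a g' := by
  simp only [psiT, adTwist_add, LinearMap.rTensor_add]
  ext w; simp
  abel

lemma psiT_neg_left (g : a ⊗[k] a) : psiT k a (-g) = -psiT k a g := by
  simp only [psiT, adTwist_neg]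
  ext w; simp

lemma psiT_zero_left : psiT k a (0 : a ⊗[k] a) = 0 := by
  simp only [psiT, adTwist_zero]
  ext w; simp

/-- `phiT (Σ p⊗q) h = Σ p ⊗ (id ⊗ ad q) h`, i.e. `[g^{13}, h^{23}]`. -/
noncomputable def phiB (h : a ⊗[k] a) : a →ₗ[k] a →ₗ[k] a ⊗[k] (a ⊗[k] a) where
  toFun p :=
  { toFun := fun q => p ⊗ₜ[k] ((LieAlgebra.ad k a q).lTensor a h)
    map_add' := fun q₁ q₂ => by
      show p ⊗ₜ[k] (LinearMap.lTensor a (LieAlgebra.ad k a (q₁ + q₂))) h = _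
      rw [map_add (LieAlgebra.ad k a), LinearMap.lTensor_add]
      simp [TensorProduct.tmul_add]
    map_smul' := fun c q => by
      show p ⊗ₜ[k] (LinearMap.lTensor a (LieAlgebra.ad k a (c • q))) h = _
      rw [map_smul (LieAlgebra.ad k a), LinearMap.lTensor_smul]
      simp [TensorProduct.tmul_smul] }
  map_add' := fun p₁ p₂ => by
    ext q; simp [TensorProduct.add_tmul]
  map_smul' := fun c p => by
    ext q; simp [TensorProduct.smul_tmul']

noncomputable def phiT (g h : a ⊗[k] a) : a ⊗[k] (a ⊗[k] a) :=
  TensorProduct.lift (phiB k a h) g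

lemma phiT_tmul (p q : a) (h : a ⊗[k] a) :
    phiT k a (p ⊗ₜ[k] q) h = p ⊗ₜ[k] ((LieAlgebra.ad k a q).lTensor a h) := rfl

lemma phiT_tmul_tmul (p q p' q' : a) :
    phiT k a (p ⊗ₜ[k] q) (p' ⊗ₜ[k] q') = p ⊗ₜ[k] (p' ⊗ₜ[k] ⁅q, q'⁆) := by
  simp [phiT_tmul]

lemma phiT_add_left (g g' h : a ⊗[k] a) :
    phiT k a (g + g') h = phiT k a g h + phiT k a g' h := by
  simp [phiT]

lemma phiT_neg_left (g h : a ⊗[k] a) : phiT k a (-g) h = -phiT k a g h := by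
  simp [phiT]

lemma phiT_zero_left (h : a ⊗[k] a) : phiT k a 0 h = 0 := by simp [phiT]

lemma phiT_add_right (g h h' : a ⊗[k] a) :
    phiT k a g (h + h') = phiT k a g h + phiT k a g h' := by
  induction g using TensorProduct.induction_on with
  | zero => simp [phiT_zero_left]
  | tmul p q => simp [phiT_tmul, TensorProduct.tmul_add]
  | add g₁ g₂ ih₁ ih₂ => simp only [phiT_add_left, ih₁, ih₂]; abel

lemma phiT_neg_right (g h : a ⊗[k] a) : phiT k a g (-h) = -phiT k a g h := by
  induction g using TensorProduct.induction_on with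
  | zero => simp [phiT_zero_left]
  | tmul p q => simp [phiT_tmul, TensorProduct.tmul_neg]
  | add g₁ g₂ ih₁ ih₂ => simp only [phiT_add_left, ih₁, ih₂]; abel

lemma phiT_zero_right (g : a ⊗[k] a) : phiT k a g 0 = 0 := by
  induction g using TensorProduct.induction_on with
  | zero => simp [phiT_zero_left]
  | tmul p q => simp [phiT_tmul]
  | add g₁ g₂ ih₁ ih₂ => simp only [phiT_add_left, ih₁, ih₂]; abel

/-- the alternation map `1 + c + c²`. -/
noncomputable def altL : a ⊗[k] (a ⊗[k] a) →ₗ[k] a ⊗[k] (a ⊗[k] a) :=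
  LinearMap.id + (cyclicPerm k a).toLinearMap
    + ((cyclicPerm k a).toLinearMap ∘ₗ (cyclicPerm k a).toLinearMap)

lemma altL_apply (t : a ⊗[k] (a ⊗[k] a)) :
    altL k a t = t + cyclicPerm k a t + cyclicPerm k a (cyclicPerm k a t) := rfl

lemma cyclicPerm_cube (t : a ⊗[k] (a ⊗[k] a)) :
    cyclicPerm k a (cyclicPerm k a (cyclicPerm k a t)) = t := by
  induction t using TensorProduct.induction_on with
  | zero => simp
  | tmul u s =>
    induction s using TensorProduct.induction_on with
    | zero => simp
    | tmul v w => simp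
    | add s₁ s₂ h₁ h₂ => simp only [TensorProduct.tmul_add, map_add, h₁, h₂]
  | add t₁ t₂ h₁ h₂ => simp only [map_add, h₁, h₂]

lemma altL_cyclic (t : a ⊗[k] (a ⊗[k] a)) :
    altL k a (cyclicPerm k a t) = altL k a t := by
  simp only [altL_apply, cyclicPerm_cube]; abel

lemma lie_cyclicPerm (x : a) (t : a ⊗[k] (a ⊗[k] a)) :
    cyclicPerm k a ⁅x, t⁆ = ⁅x, cyclicPerm k a t⁆ := by
  induction t using TensorProduct.induction_on with
  | zero => simp
  | tmul u s =>
    induction s using TensorProduct.induction_on with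
    | zero => simp
    | tmul v w => simp [TensorProduct.tmul_add, lie_add]; abel
    | add s₁ s₂ h₁ h₂ =>
      simp only [TensorProduct.tmul_add, lie_add, map_add, h₁, h₂]
  | add t₁ t₂ h₁ h₂ => simp only [lie_add, map_add, h₁, h₂]

lemma lie_altL (x : a) (t : a ⊗[k] (a ⊗[k] a)) :
    altL k a ⁅x, t⁆ = ⁅x, altL k a t⁆ := by
  simp only [altL_apply, lie_cyclicPerm, lie_add]

lemma comm_lie (x : a) (t : a ⊗[k] a) :
    TensorProduct.comm k a a ⁅x, t⁆ = ⁅x, TensorProduct.comm k a a t⁆ := by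
  induction t using TensorProduct.induction_on with
  | zero => simp
  | tmul u v => simp; abel
  | add t₁ t₂ h₁ h₂ => simp only [lie_add, map_add, h₁, h₂]

lemma cobr_twist (δ : a →ₗ[k] a ⊗[k] a) (f w : a ⊗[k] a) :
    cobrTensorId k a (δ + adTwist k a f) w
      = cobrTensorId k a δ w - psiT k a f w := by
  simp only [cobrTensorId, psiT, LinearMap.rTensor_add, LinearMap.add_apply, map_add,
    LinearMap.neg_apply, LinearMap.coe_comp, Function.comp_apply, LinearEquiv.coe_coe,
    sub_neg_eq_add]

lemma lie_assoc_tmul (x : a) (s : a ⊗[k] a) (w : a) :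
    ⁅x, (TensorProduct.assoc k a a a) (s ⊗ₜ[k] w)⁆
      = (TensorProduct.assoc k a a a) (⁅x, s⁆ ⊗ₜ[k] w)
        + (TensorProduct.assoc k a a a) (s ⊗ₜ[k] ⁅x, w⁆) := by
  induction s using TensorProduct.induction_on with
  | zero => simp
  | tmul u v => simp [TensorProduct.add_tmul, TensorProduct.tmul_add, lie_add]; abel
  | add s₁ s₂ h₁ h₂ =>
    simp only [TensorProduct.add_tmul, map_add, lie_add, h₁, h₂]
    abel

lemma cobr_add (δ : a →ₗ[k] a ⊗[k] a) (w₁ w₂ : a ⊗[k] a) :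
    cobrTensorId k a δ (w₁ + w₂) = cobrTensorId k a δ w₁ + cobrTensorId k a δ w₂ := by
  simp [cobrTensorId]

lemma cobr_zero (δ : a →ₗ[k] a ⊗[k] a) : cobrTensorId k a δ 0 = 0 := by
  simp [cobrTensorId]

lemma cobr_sub (δ : a →ₗ[k] a ⊗[k] a) (w₁ w₂ : a ⊗[k] a) :
    cobrTensorId k a δ (w₁ - w₂) = cobrTensorId k a δ w₁ - cobrTensorId k a δ w₂ := by
  simp [cobrTensorId]

lemma cobr_lie (δ : a →ₗ[k] a ⊗[k] a)
    (hco : ∀ x y : a, δ ⁅x, y⁆ = ⁅x, δ y⁆ - ⁅y, δ x⁆) (x : a) (w : a ⊗[k] a) :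
    cobrTensorId k a δ ⁅x, w⁆
      = ⁅x, cobrTensorId k a δ w⁆ - psiT k a (δ x) w := by
  induction w using TensorProduct.induction_on with
  | zero => rw [lie_zero, cobr_zero]; simp
  | tmul p q =>
    simp only [TensorProduct.LieModule.lie_tmul_right, cobrTensorId, map_add,
      LinearMap.rTensor_tmul, hco, TensorProduct.sub_tmul, map_sub, psiT_tmul,
      lie_assoc_tmul]
    abel
  | add w₁ w₂ h₁ h₂ =>
    rw [lie_add, cobr_add, h₁, h₂, cobr_add, lie_add, map_add]
    abel

noncomputable def X1 (g h : a ⊗[k] a) : a ⊗[k] (a ⊗[k] a) :=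
  psiT k a g h - psiT k a h g

lemma X1_add_left (g g' h : a ⊗[k] a) :
    X1 k a (g + g') h = X1 k a g h + X1 k a g' h := by
  simp only [X1, psiT_add_left, LinearMap.add_apply, map_add]; abel

lemma X1_add_right (g h h' : a ⊗[k] a) :
    X1 k a g (h + h') = X1 k a g h + X1 k a g h' := by
  simp only [X1, psiT_add_left, LinearMap.add_apply, map_add]; abel

lemma X1_zero_left (h : a ⊗[k] a) : X1 k a 0 h = 0 := by
  simp [X1, psiT_zero_left]

lemma X1_zero_right (g : a ⊗[k] a) : X1 k a g 0 = 0 := by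
  simp [X1, psiT_zero_left]

lemma X1_neg_left (g h : a ⊗[k] a) : X1 k a (-g) h = -X1 k a g h := by
  simp only [X1, psiT_neg_left, LinearMap.neg_apply, map_neg]; abel

lemma X1_neg_right (g h : a ⊗[k] a) : X1 k a g (-h) = -X1 k a g h := by
  simp only [X1, psiT_neg_left, LinearMap.neg_apply, map_neg]; abel

noncomputable def E1 (g h : a ⊗[k] a) : a ⊗[k] (a ⊗[k] a) :=
  X1 k a g h - X1 k a (TensorProduct.comm k a a g) h
    - X1 k a g (TensorProduct.comm k a a h)
    + X1 k a (TensorProduct.comm k a a g) (TensorProduct.comm k a a h)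

lemma E1_add_left (g g' h : a ⊗[k] a) :
    E1 k a (g + g') h = E1 k a g h + E1 k a g' h := by
  simp only [E1, map_add, X1_add_left, X1_add_right]; abel

lemma E1_zero_left (h : a ⊗[k] a) : E1 k a 0 h = 0 := by
  simp [E1, X1_zero_left, X1_zero_right]

lemma E1_add_right (g h h' : a ⊗[k] a) :
    E1 k a g (h + h') = E1 k a g h + E1 k a g h' := by
  simp only [E1, map_add, X1_add_left, X1_add_right]; abel

lemma E1_zero_right (g : a ⊗[k] a) : E1 k a g 0 = 0 := by
  simp [E1, X1_zero_left, X1_zero_right]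

lemma gen1 (g h : a ⊗[k] a) : altL k a (E1 k a g h) = 0 := by
  induction g using TensorProduct.induction_on with
  | zero => rw [E1_zero_left, map_zero]
  | add g₁ g₂ ih₁ ih₂ => rw [E1_add_left, map_add, ih₁, ih₂, add_zero]
  | tmul u v =>
    induction h using TensorProduct.induction_on with
    | zero => rw [E1_zero_right, map_zero]
    | add h₁ h₂ ih₁ ih₂ => rw [E1_add_right, map_add, ih₁, ih₂, add_zero]
    | tmul p q =>
      simp only [E1, X1, TensorProduct.comm_tmul, psiT_tmul_tmul]
      simp only [map_add, map_sub, altL_apply, cyclicPerm_tmul]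
      rw [(lie_skew u p).symm, (lie_skew u q).symm, (lie_skew v p).symm,
        (lie_skew v q).symm]
      simp only [TensorProduct.neg_tmul, TensorProduct.tmul_neg]
      abel

noncomputable def Q2 (x : a) (g h : a ⊗[k] a) : a ⊗[k] (a ⊗[k] a) :=
  psiT k a g ⁅x, h⁆ + ⁅x, phiT k a g h⁆

lemma Q2_add_left (x : a) (g g' h : a ⊗[k] a) :
    Q2 k a x (g + g') h = Q2 k a x g h + Q2 k a x g' h := by
  simp only [Q2, psiT_add_left, LinearMap.add_apply, phiT_add_left, lie_add]; abel

lemma Q2_add_right (x : a) (g h h' : a ⊗[k] a) :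
    Q2 k a x g (h + h') = Q2 k a x g h + Q2 k a x g h' := by
  simp only [Q2, lie_add, map_add, phiT_add_right]; abel

lemma Q2_zero_left (x : a) (h : a ⊗[k] a) : Q2 k a x 0 h = 0 := by
  simp [Q2, psiT_zero_left, phiT_zero_left]

lemma Q2_zero_right (x : a) (g : a ⊗[k] a) : Q2 k a x g 0 = 0 := by
  simp [Q2, phiT_zero_right]

lemma Q2_neg_left (x : a) (g h : a ⊗[k] a) : Q2 k a x (-g) h = -Q2 k a x g h := by
  simp only [Q2, psiT_neg_left, LinearMap.neg_apply, phiT_neg_left, lie_neg]; abel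

lemma Q2_neg_right (x : a) (g h : a ⊗[k] a) : Q2 k a x g (-h) = -Q2 k a x g h := by
  simp only [Q2, lie_neg, map_neg, phiT_neg_right]; abel

noncomputable def E2 (x : a) (g h : a ⊗[k] a) : a ⊗[k] (a ⊗[k] a) :=
  (Q2 k a x g h - Q2 k a x (TensorProduct.comm k a a g) h
    - Q2 k a x g (TensorProduct.comm k a a h)
    + Q2 k a x (TensorProduct.comm k a a g) (TensorProduct.comm k a a h))
  + (Q2 k a x h g - Q2 k a x (TensorProduct.comm k a a h) g
    - Q2 k a x h (TensorProduct.comm k a a g)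
    + Q2 k a x (TensorProduct.comm k a a h) (TensorProduct.comm k a a g))

lemma E2_comm (x : a) (g h : a ⊗[k] a) : E2 k a x g h = E2 k a x h g := by
  simp only [E2]; abel

lemma E2_add_left (x : a) (g g' h : a ⊗[k] a) :
    E2 k a x (g + g') h = E2 k a x g h + E2 k a x g' h := by
  simp only [E2, map_add, Q2_add_left, Q2_add_right]; abel

lemma E2_zero_left (x : a) (h : a ⊗[k] a) : E2 k a x 0 h = 0 := by
  simp [E2, Q2_zero_left, Q2_zero_right]

lemma gen2 (x : a) (g h : a ⊗[k] a) : altL k a (E2 k a x g h) = 0 := by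
  have J : ∀ y z : a, ⁅x, ⁅y, z⁆⁆ = ⁅⁅x, y⁆, z⁆ - ⁅⁅x, z⁆, y⁆ := fun y z => by
    rw [leibniz_lie, (lie_skew y ⁅x, z⁆).symm, sub_eq_add_neg]
  induction g using TensorProduct.induction_on with
  | zero => rw [E2_zero_left, map_zero]
  | add g₁ g₂ ih₁ ih₂ => rw [E2_add_left, map_add, ih₁, ih₂, add_zero]
  | tmul u v =>
    induction h using TensorProduct.induction_on with
    | zero => rw [E2_comm, E2_zero_left, map_zero]
    | add h₁ h₂ ih₁ ih₂ =>
      rw [E2_comm, E2_add_left, map_add, E2_comm k a x h₁, ih₁, E2_comm k a x h₂,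
        ih₂, add_zero]
    | tmul p q =>
      simp only [E2, Q2, TensorProduct.comm_tmul, TensorProduct.LieModule.lie_tmul_right,
        map_add, psiT_tmul_tmul, phiT_tmul_tmul, TensorProduct.tmul_add]
      simp only [map_add, map_sub, altL_apply, cyclicPerm_tmul]
      rw [(lie_skew u p).symm, (lie_skew u q).symm, (lie_skew v p).symm,
        (lie_skew v q).symm]
      simp only [lie_neg, TensorProduct.neg_tmul, TensorProduct.tmul_neg]
      rw [J p u, J p v, J q u, J q v]
      simp only [TensorProduct.sub_tmul, TensorProduct.tmul_sub,
        TensorProduct.neg_tmul, TensorProduct.tmul_neg]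
      abel

lemma phiT_sum_left {ι : Type*} (s : Finset ι) (t : ι → a ⊗[k] a) (h : a ⊗[k] a) :
    phiT k a (∑ i ∈ s, t i) h = ∑ i ∈ s, phiT k a (t i) h := by
  simp only [phiT]; exact map_sum _ _ _

lemma phiT_sum_right (p q : a) {ι : Type*} (s : Finset ι) (t : ι → a ⊗[k] a) :
    phiT k a (p ⊗ₜ[k] q) (∑ i ∈ s, t i) = ∑ i ∈ s, phiT k a (p ⊗ₜ[k] q) (t i) := by
  simp [phiT_tmul, map_sum, TensorProduct.tmul_sum]

end TwistAux

open TwistAux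

/-- If `(a, μ, δ)` is a Lie bialgebra and `f ∈ ∧²(a)` is a twist,
then `(a, μ, δ + ad(f))` is again a Lie bialgebra: the twisted cobracket takes
values in `∧²(a)`, is a 1-cocycle, and satisfies co-Jacobi. -/
theorem twisted_lie_bialgebra
    (k : Type*) [Field k] [CharZero k]
    (a : Type*) [LieRing a] [LieAlgebra k a]
    (δ : a →ₗ[k] a ⊗[k] a)
    (hskew : ∀ x : a, (TensorProduct.comm k a a) (δ x) = -δ x)
    (hcocycle : ∀ x y : a, δ ⁅x, y⁆ = ⁅x, δ y⁆ - ⁅y, δ x⁆)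
    (hcojac : ∀ x : a,
      cobrTensorId k a δ (δ x) + cyclicPerm k a (cobrTensorId k a δ (δ x))
        + cyclicPerm k a (cyclicPerm k a (cobrTensorId k a δ (δ x))) = 0)
    (N : ℕ) (A B : Fin N → a)
    (f : a ⊗[k] a) (hrep : f = ∑ i, A i ⊗ₜ[k] B i)
    (hanti : (TensorProduct.comm k a a) f = -f)
    (htwist :
      (let E : a ⊗[k] (a ⊗[k] a) :=
          cobrTensorId k a δ f + ∑ i, ∑ j, A i ⊗ₜ[k] (A j ⊗ₜ[k] ⁅B i, B j⁆);
        E + cyclicPerm k a E + cyclicPerm k a (cyclicPerm k a E) = 0)) :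
    (∀ x : a, (TensorProduct.comm k a a) ((δ + adTwist k a f) x)
        = -((δ + adTwist k a f) x)) ∧
    (∀ x y : a, (δ + adTwist k a f) ⁅x, y⁆
        = ⁅x, (δ + adTwist k a f) y⁆ - ⁅y, (δ + adTwist k a f) x⁆) ∧
    (∀ x : a,
      cobrTensorId k a (δ + adTwist k a f) ((δ + adTwist k a f) x)
        + cyclicPerm k a (cobrTensorId k a (δ + adTwist k a f) ((δ + adTwist k a f) x))
        + cyclicPerm k a (cyclicPerm k a
            (cobrTensorId k a (δ + adTwist k a f) ((δ + adTwist k a f) x))) = 0) := by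
  have happly : ∀ x : a, (δ + adTwist k a f) x = δ x - ⁅x, f⁆ := fun x => by
    simp [sub_eq_add_neg]
  have div4 : ∀ S : a ⊗[k] (a ⊗[k] a), S + S + S + S = 0 → S = 0 := by
    intro S hS
    have e4 : (4 : k) • S = S + S + S + S := by module
    have h4 : (4 : k) • S = 0 := by rw [e4]; exact hS
    rcases smul_eq_zero.mp h4 with h | h
    · exact absurd h (by norm_num)
    · exact h
  have div8 : ∀ S : a ⊗[k] (a ⊗[k] a),
      S + S + S + S + S + S + S + S = 0 → S = 0 := by
    intro S hS
    have e8 : (8 : k) • S = S + S + S + S + S + S + S + S := by module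
    have h8 : (8 : k) • S = 0 := by rw [e8]; exact hS
    rcases smul_eq_zero.mp h8 with h | h
    · exact absurd h (by norm_num)
    · exact h
  have phi_rep : phiT k a f f = ∑ i, ∑ j, A i ⊗ₜ[k] (A j ⊗ₜ[k] ⁅B i, B j⁆) := by
    conv_lhs => rw [hrep]
    rw [phiT_sum_left]
    refine Finset.sum_congr rfl fun i _ => ?_
    rw [phiT_sum_right]
    exact Finset.sum_congr rfl fun j _ => phiT_tmul_tmul k a _ _ _ _
  refine ⟨?_, ?_, ?_⟩
  · intro x
    rw [happly x, map_sub, comm_lie, hskew x, hanti, lie_neg]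
    abel
  · intro x y
    simp only [LinearMap.add_apply, adTwist_apply, hcocycle, lie_lie, lie_add, lie_neg]
    abel
  · intro x
    -- the three summands
    have n1 : altL k a (X1 k a (δ x) f) = 0 := by
      have hS1 := gen1 k a (δ x) f
      have e : E1 k a (δ x) f
          = X1 k a (δ x) f + X1 k a (δ x) f + X1 k a (δ x) f + X1 k a (δ x) f := by
        rw [E1, hskew x, hanti]
        simp only [X1_neg_left, X1_neg_right, neg_neg, sub_neg_eq_add]
      rw [e, map_add, map_add, map_add] at hS1
      exact div4 _ hS1
    have n2 : altL k a (Q2 k a x f f) = 0 := by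
      have hS2 := gen2 k a x f f
      have e : E2 k a x f f
          = Q2 k a x f f + Q2 k a x f f + Q2 k a x f f + Q2 k a x f f
            + Q2 k a x f f + Q2 k a x f f + Q2 k a x f f + Q2 k a x f f := by
        rw [E2, hanti]
        simp only [Q2_neg_left, Q2_neg_right, neg_neg, sub_neg_eq_add]
        abel
      rw [e, map_add, map_add, map_add, map_add, map_add, map_add, map_add] at hS2
      exact div8 _ hS2
    have hc0 : altL k a (cobrTensorId k a δ (δ x)) = 0 := hcojac x
    have htw0 : altL k a (cobrTensorId k a δ f + phiT k a f f) = 0 := by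
      rw [phi_rep]; exact htwist
    have expand : cobrTensorId k a (δ + adTwist k a f) ((δ + adTwist k a f) x)
        = cobrTensorId k a δ (δ x)
          - ⁅x, cobrTensorId k a δ f + phiT k a f f⁆
          + X1 k a (δ x) f + Q2 k a x f f := by
      rw [happly x, cobr_twist, cobr_sub, cobr_lie k a δ hcocycle x f,
        map_sub (psiT k a f), X1, Q2, lie_add]
      abel
    rw [← altL_apply, expand]
    simp only [map_add, map_sub]
    rw [hc0, n1, n2, lie_altL, htw0, lie_zero]
    abel
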